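/- For all natural numbers i, j and real k, b_{i+1,j+1,k} = (j+1) · Σ_{r=j}^{i} b_{r,j,k} · (j+k+1)^{i-r}. -/
import Mathlib


open Finset

noncomputable def msn (i j : ℕ) (k : ℝ) : ℝ :=
  ∑ r ∈ Finset.range (j + 1), (j.choose r : ℝ) * (-1 : ℝ) ^ (j - r) * ((r : ℝ) + k) ^ i

lemma msn_rec (m j : ℕ) (k : ℝ) :
    msn (m + 1) (j + 1) k = ((j : ℝ) + k + 1) * msn m (j + 1) k + ((j : ℝ) + 1) * msn m j k := by
  unfold msn
  rw [Finset.mul_sum, Finset.mul_sum]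
  rw [show j + 1 + 1 = (j + 1) + 1 from rfl]
  rw [Finset.sum_range_succ (n := j + 1), Finset.sum_range_succ (n := j + 1)
    (f := fun r => ((j:ℝ)+k+1) * ((j+1).choose r * (-1:ℝ)^(j+1-r) * ((r:ℝ)+k)^m))]
  have hmain : ∑ r ∈ Finset.range (j + 1), ((j + 1).choose r : ℝ) * (-1 : ℝ) ^ (j + 1 - r) * ((r : ℝ) + k) ^ (m + 1)
      = ∑ r ∈ Finset.range (j + 1), (((j : ℝ) + k + 1) * (((j + 1).choose r : ℝ) * (-1 : ℝ) ^ (j + 1 - r) * ((r : ℝ) + k) ^ m)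
          + ((j : ℝ) + 1) * ((j.choose r : ℝ) * (-1 : ℝ) ^ (j - r) * ((r : ℝ) + k) ^ m)) := by
    apply Finset.sum_congr rfl
    intro r hr
    have hr' : r ≤ j := Nat.lt_succ_iff.mp (Finset.mem_range.mp hr)
    have hc : ((j + 1).choose r : ℝ) * ((j : ℝ) + 1 - r) = ((j : ℝ) + 1) * (j.choose r : ℝ) := by
      have h := Nat.choose_mul_succ_eq j r
      have h2 : ((j + 1 - r : ℕ) : ℝ) = (j : ℝ) + 1 - r := by
        have : r ≤ j + 1 := le_trans hr' (Nat.le_succ j)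
        push_cast [this]; ring
      have := congrArg (fun n : ℕ => (n : ℝ)) h
      push_cast at this
      rw [h2] at this
      linarith
    have hp : (-1 : ℝ) ^ (j + 1 - r) = (-1 : ℝ) ^ (j - r) * (-1) := by
      rw [show j + 1 - r = (j - r) + 1 from by omega, pow_succ]
    rw [hp, pow_succ]
    linear_combination ((-1 : ℝ) ^ (j - r) * ((r : ℝ) + k) ^ m) * hc
  rw [hmain, Finset.sum_add_distrib]
  push_cast
  ring

lemma msn_vanish : ∀ m n : ℕ, m < n → ∀ k : ℝ, msn m n k = 0 := by
  intro m
  induction m with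
  | zero =>
    intro n hn k
    have h := add_pow (1 : ℝ) (-1) n
    simp only [one_pow, one_mul] at h
    have h0 : ((1 : ℝ) + (-1)) ^ n = 0 := by
      have : n ≠ 0 := by omega
      simp [zero_pow this]
    unfold msn
    have h2 : ∑ r ∈ Finset.range (n + 1), (n.choose r : ℝ) * (-1 : ℝ) ^ (n - r) * ((r : ℝ) + k) ^ 0
        = ∑ r ∈ Finset.range (n + 1), (-1 : ℝ) ^ (n - r) * (n.choose r : ℝ) := by
      apply Finset.sum_congr rfl; intro r _; ring
    rw [h2, ← h, h0]
  | succ m ih =>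
    intro n hn k
    obtain ⟨t, rfl⟩ : ∃ t, n = t + 1 := ⟨n - 1, by omega⟩
    rw [msn_rec, ih (t + 1) (by omega) k, ih t (by omega) k]
    ring

theorem stmt (i j : ℕ) (k : ℝ) : msn (i + 1) (j + 1) k = ((j : ℝ) + 1) * ∑ r ∈ Finset.Icc j i, msn r j k * ((j : ℝ) + k + 1) ^ (i - r) := by
  induction i with
  | zero =>
    rcases Nat.eq_zero_or_pos j with hj | hj
    · subst hj
      simp only [Finset.Icc_self, Finset.sum_singleton, Nat.sub_self, pow_zero]
      unfold msn
      simp [Finset.sum_range_succ]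
    · rw [Finset.Icc_eq_empty (by omega), Finset.sum_empty, mul_zero]
      exact msn_vanish 1 (j + 1) (by omega) k
  | succ i ih =>
    by_cases hji : j ≤ i + 1
    · rw [Finset.sum_Icc_succ_top hji]
      have hsum : ∑ r ∈ Finset.Icc j i, msn r j k * ((j : ℝ) + k + 1) ^ (i + 1 - r)
          = ((j : ℝ) + k + 1) * ∑ r ∈ Finset.Icc j i, msn r j k * ((j : ℝ) + k + 1) ^ (i - r) := by
        rw [Finset.mul_sum]
        apply Finset.sum_congr rfl
        intro r hr
        have : r ≤ i := (Finset.mem_Icc.mp hr).2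
        rw [show i + 1 - r = (i - r) + 1 from by omega, pow_succ]
        ring
      rw [hsum, Nat.sub_self, pow_zero]
      rw [msn_rec (i + 1) j k, ih]
      ring
    · rw [Finset.Icc_eq_empty (by omega), Finset.sum_empty, mul_zero]
      exact msn_vanish (i + 2) (j + 1) (by omega) k
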